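/- Greater confidence in the signal brings the average posterior mean closer to the state (Proposition 2). Let f_X be a log-concave density symmetric about its mean μ, let f_ε be a quasi-concave density symmetric about 0 (the objective noise density), and let f_A and f_B be quasi-concave densities symmetric about 0 (subjective noise densities) such that f_B is less precise than f_A (agent A is more confident than B). For i ∈ {A,B}, define the subjective posterior mean m_i(s) := (∫ x·f_X(x)·f_i(s−x) dx)/(∫ f_X(x)·f_i(s−x) dx). Then for every x ≥ μ: x ≥ ∫ m_A(s)·f_ε(s−x) ds ≥ ∫ m_B(s)·f_ε(s−x) ds ≥ μ, and for every x ≤ μ: x ≤ ∫ m_A(s)·f_ε(s−x) ds ≤ ∫ m_B(s)·f_ε(s−x) ds ≤ μ. -/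

import Mathlib

/-!
For a symmetric prior and symmetric unimodal noise the posterior mean `m` satisfies
`m (2μ - s) = 2μ - m s`, and pairing each state `x` with its mirror image shows
`μ ≤ m s ≤ s` for `s ≥ μ` (the upper bound uses log-concavity of the prior).
For `s ≥ μ` the more confident posterior mean is the larger one: with
`w_i x = f_X x * f_i (s - x)`, the cross difference of numerators and denominators is
`∫∫ (x - y) w_A x w_B y`, and symmetrizing under `(x, y) ↦ (y, x)` and under reflection
through `(s, s)` turns the integrand into a product whose factors change sign together, by
the precision ordering and by log-concavity. Finally, symmetric unimodal noise centred at
`x ≥ μ` gives each signal `s ≥ μ` at least the weight of its mirror image `2μ - s`, so the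
ordering `s ≥ m_A s ≥ m_B s ≥ μ` on `[μ, ∞)` survives averaging over the signal; the case
`x ≤ μ` is its mirror image.
-/

open MeasureTheory Real Set

noncomputable section

/-- A density: everywhere positive, continuously differentiable, integrates to 1,
with finite first absolute moment. -/
def IsDensity (f : ℝ → ℝ) : Prop :=
  (∀ x, 0 < f x) ∧ ContDiff ℝ 1 f ∧ (∫ x, f x) = 1 ∧
    MeasureTheory.Integrable (fun x => |x| * f x)

/-- `f` is symmetric about `m`. -/
def SymmAbout (m : ℝ) (f : ℝ → ℝ) : Prop := ∀ x, f (m + x) = f (m - x)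

/-- `f` is quasi-concave. -/
def QuasiConcaveFn (f : ℝ → ℝ) : Prop :=
  ∀ x y t : ℝ, 0 ≤ t → t ≤ 1 → min (f x) (f y) ≤ f (t * x + (1 - t) * y)

/-- `f` is log-concave. -/
def LogConcaveFn (f : ℝ → ℝ) : Prop := ConcaveOn ℝ Set.univ fun x => Real.log (f x)

/-- `g` is less precise than `f`: the ratio `g/f` is nondecreasing on `(0, ∞)`. -/
def LessPrecise (g f : ℝ → ℝ) : Prop := MonotoneOn (fun x => g x / f x) (Set.Ioi 0)

/-- Posterior mean at signal realization `s` under prior `fX` and noise density `fε`. -/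
def postMean (fX fε : ℝ → ℝ) (s : ℝ) : ℝ :=
  (∫ x, x * fX x * fε (s - x)) / (∫ x, fX x * fε (s - x))

section Shape

variable {f g : ℝ → ℝ} {m μ s x y u v : ℝ}

theorem IsDensity.continuous (hf : IsDensity f) : Continuous f := hf.2.1.continuous

theorem IsDensity.integrable (hf : IsDensity f) : Integrable f :=
  Integrable.of_integral_ne_zero (by rw [hf.2.2.1]; exact one_ne_zero)

theorem IsDensity.integrable_id_mul (hf : IsDensity f) : Integrable fun x => x * f x :=
  hf.2.2.2.mono (continuous_id.mul hf.continuous).aestronglyMeasurable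
    (.of_forall fun x => by simp)

theorem IsDensity.integrable_sub_mul (hf : IsDensity f) (c : ℝ) :
    Integrable fun x => (x - c) * f x :=
  (hf.integrable_id_mul.sub (hf.integrable.const_mul c)).congr (.of_forall fun x => by
    simp only [Pi.sub_apply]
    ring)

theorem SymmAbout.apply_two_mul_sub (h : SymmAbout m f) (x : ℝ) : f (2 * m - x) = f x := by
  rw [show 2 * m - x = m - (x - m) by ring, ← h, add_sub_cancel]

theorem SymmAbout.apply_neg (h : SymmAbout 0 f) (x : ℝ) : f (-x) = f x := by
  simpa using h.apply_two_mul_sub x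

theorem SymmAbout.apply_abs (h : SymmAbout 0 f) (x : ℝ) : f |x| = f x := by
  rcases abs_choice x with hx | hx <;> rw [hx]
  exact h.apply_neg x

theorem QuasiConcaveFn.le_of_abs_sub_le (hqc : QuasiConcaveFn f) (hs : SymmAbout m f)
    (h : |u - m| ≤ |v - m|) : f v ≤ f u := by
  rcases eq_or_ne v m with rfl | hv
  · rw [show u = v by simpa [sub_eq_zero] using h]
  -- `u` is a convex combination of `v` and its mirror image `2 * m - v`
  set q := (u - m) / (v - m)
  have hq : |q| ≤ 1 := by
    rw [abs_div, div_le_one (abs_pos.2 (sub_ne_zero.2 hv))]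
    exact h
  have hu : (1 + q) / 2 * v + (1 - (1 + q) / 2) * (2 * m - v) = u := by
    linear_combination div_mul_cancel₀ (u - m) (sub_ne_zero.2 hv)
  have := hqc v (2 * m - v) ((1 + q) / 2) (by linarith [neg_abs_le q]) (by linarith [le_abs_self q])
  rwa [hs.apply_two_mul_sub, min_self, hu] at this

theorem QuasiConcaveFn.le_of_abs_le (hqc : QuasiConcaveFn f) (hs : SymmAbout 0 f)
    (h : |u| ≤ |v|) : f v ≤ f u :=
  hqc.le_of_abs_sub_le hs (by simpa using h)

theorem ConcaveOn.quasiConcaveFn (hf : ConcaveOn ℝ univ f) : QuasiConcaveFn f :=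
  fun x y t ht0 ht1 => hf.min_le_of_mem_segment (mem_univ x) (mem_univ y)
    ⟨t, 1 - t, ht0, sub_nonneg.2 ht1, by ring, by simp only [smul_eq_mul]⟩

theorem LogConcaveFn.quasiConcaveFn (hlc : LogConcaveFn f) (hpos : ∀ x, 0 < f x) :
    QuasiConcaveFn f := fun x y t ht0 ht1 => by
  rcases min_le_iff.1 (ConcaveOn.quasiConcaveFn hlc x y t ht0 ht1) with h | h
  · exact min_le_of_left_le ((log_le_log_iff (hpos _) (hpos _)).1 h)
  · exact min_le_of_right_le ((log_le_log_iff (hpos _) (hpos _)).1 h)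

theorem LogConcaveFn.mul_le_mul_of_add_le (hlc : LogConcaveFn f) (hpos : ∀ x, 0 < f x)
    (hsym : SymmAbout μ f) (hμs : μ ≤ s) (hxy : x + y ≤ 2 * s) :
    f (2 * s - x) * f (2 * s - y) ≤ f x * f y := by
  set d := (x - y) / 2
  -- reflecting the midpoint `(x + y) / 2` about `s ≥ μ` moves it away from `μ`,
  -- and `φ` is symmetric about `μ` and quasi-concave
  set φ : ℝ → ℝ := fun c => log (f (c + d)) + log (f (c - d))
  have hφ : QuasiConcaveFn φ := by
    have h₁ := hlc.translate_left d
    have h₂ := hlc.translate_left (-d)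
    rw [preimage_univ] at h₁ h₂
    convert (h₁.add h₂).quasiConcaveFn using 1
    funext c
    simp [φ, sub_eq_add_neg]
  have hφs : SymmAbout μ φ := fun c => by
    simp only [φ]
    rw [show μ - c + d = μ - (c - d) by ring, show μ - c - d = μ - (c + d) by ring, ← hsym,
      ← hsym, add_comm]
    ring_nf
  have key := hφ.le_of_abs_sub_le hφs
    (abs_le_abs (by linarith) (by linarith) : |(x + y) / 2 - μ| ≤ |2 * s - (x + y) / 2 - μ|)
  simp only [φ] at key
  rw [show (x + y) / 2 + d = x by ring, show (x + y) / 2 - d = y by ring,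
    show 2 * s - (x + y) / 2 + d = 2 * s - y by ring,
    show 2 * s - (x + y) / 2 - d = 2 * s - x by ring, ← log_mul (hpos _).ne' (hpos _).ne',
    ← log_mul (hpos _).ne' (hpos _).ne', log_le_log_iff (mul_pos (hpos _) (hpos _))
    (mul_pos (hpos _) (hpos _))] at key
  linarith

theorem LessPrecise.monotoneOn_Ici (hgf : LessPrecise g f) (hg : Continuous g)
    (hf : Continuous f) (hpos : ∀ x, 0 < f x) : MonotoneOn (fun x => g x / f x) (Ici 0) := by
  rw [← Ioi_insert]
  exact hgf.insert_of_continuousWithinAt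
    (mem_closure_iff_clusterPt.1 (by rw [closure_Ioi]; exact mem_Ici.2 le_rfl))
    (hg.div hf fun x => (hpos x).ne').continuousWithinAt

theorem LessPrecise.mul_le_mul_of_abs_le (hgf : LessPrecise g f) (hg : Continuous g)
    (hf : Continuous f) (hpos : ∀ x, 0 < f x) (hgs : SymmAbout 0 g) (hfs : SymmAbout 0 f)
    (h : |u| ≤ |v|) : g u * f v ≤ g v * f u := by
  have := hgf.monotoneOn_Ici hg hf hpos (abs_nonneg u) (abs_nonneg v) h
  dsimp only at this
  rwa [hgs.apply_abs, hgs.apply_abs, hfs.apply_abs, hfs.apply_abs,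
    div_le_div_iff₀ (hpos u) (hpos v)] at this

end Shape

section Reflection

variable {α : Type*} [MeasurableSpace α] {μ : Measure α} {σ : α → α} {g : α → ℝ}

theorem MeasureTheory.MeasurePreserving.integral_add_comp (hσ : MeasurePreserving σ μ μ)
    (he : MeasurableEmbedding σ) (hg : Integrable g μ) :
    ∫ x, (g x + g (σ x)) ∂μ = 2 * ∫ x, g x ∂μ := by
  have hgσ : Integrable (fun x => g (σ x)) μ := (hσ.integrable_comp_emb he).2 hg
  rw [integral_add hg hgσ, hσ.integral_comp he]
  ring

theorem MeasureTheory.MeasurePreserving.integral_nonneg_of_add_comp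
    (hσ : MeasurePreserving σ μ μ) (he : MeasurableEmbedding σ) (hg : Integrable g μ)
    (h : ∀ x, 0 ≤ g x + g (σ x)) :
    0 ≤ ∫ x, g x ∂μ := by
  have : 0 ≤ ∫ x, (g x + g (σ x)) ∂μ := integral_nonneg h
  rw [hσ.integral_add_comp he hg] at this
  linarith

theorem integral_nonneg_of_reflect {g : ℝ → ℝ} (hg : Integrable g) (c : ℝ)
    (h : ∀ x, c ≤ x → 0 ≤ g x + g (2 * c - x)) : 0 ≤ ∫ x, g x := by
  refine (Measure.measurePreserving_sub_left volume (2 * c)).integral_nonneg_of_add_comp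
    (measurableEmbedding_subLeft _) hg fun x => ?_
  rcases le_total c x with hx | hx
  · exact h x hx
  · simpa [add_comm] using h (2 * c - x) (by linarith)

theorem integral_nonpos_of_reflect {g : ℝ → ℝ} (hg : Integrable g) (c : ℝ)
    (h : ∀ x, c ≤ x → g x + g (2 * c - x) ≤ 0) : ∫ x, g x ≤ 0 := by
  have := integral_nonneg_of_reflect hg.neg c fun x hx => by
    simp only [Pi.neg_apply]
    linarith [h x hx]
  simpa [integral_neg] using this

end Reflection

section Posterior

variable {fX f : ℝ → ℝ} {μ s : ℝ}

theorem MeasureTheory.Integrable.mul_comp_sub {g : ℝ → ℝ} (hg : Integrable g)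
    (hf : IsDensity f) (hfs : SymmAbout 0 f) (hqc : QuasiConcaveFn f) (s : ℝ) :
    Integrable fun x => g x * f (s - x) :=
  hg.mul_bdd (c := f 0) (hf.continuous.comp (continuous_sub_left s)).aestronglyMeasurable
    (.of_forall fun x => by
      rw [norm_of_nonneg (hf.1 _).le]
      exact hqc.le_of_abs_le hfs (by simp))

theorem measurable_postMean (hX : Continuous fX) (hf : Continuous f) :
    Measurable (postMean fX f) := by
  have hN := StronglyMeasurable.integral_prod_right (ν := volume)
    (f := fun s x => x * fX x * f (s - x)) (by fun_prop : Continuous fun p : ℝ × ℝ =>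
      p.2 * fX p.2 * f (p.1 - p.2)).stronglyMeasurable
  have hD := StronglyMeasurable.integral_prod_right (ν := volume)
    (f := fun s x => fX x * f (s - x)) (by fun_prop : Continuous fun p : ℝ × ℝ =>
      fX p.2 * f (p.1 - p.2)).stronglyMeasurable
  exact hN.measurable.div hD.measurable

variable (hX : IsDensity fX) (hf : IsDensity f) (hfs : SymmAbout 0 f) (hqc : QuasiConcaveFn f)
include hX hf hfs hqc

theorem integral_mul_comp_sub_pos (s : ℝ) : 0 < ∫ x, fX x * f (s - x) :=
  integral_pos_of_integrable_nonneg_nonzero (x := 0)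
    (hX.continuous.mul (hf.continuous.comp (continuous_sub_left s)))
    (hX.integrable.mul_comp_sub hf hfs hqc s) (fun x => (mul_pos (hX.1 x) (hf.1 _)).le)
    (mul_pos (hX.1 0) (hf.1 _)).ne'

theorem postMean_sub_eq (s c : ℝ) :
    postMean fX f s - c = (∫ x, (x - c) * fX x * f (s - x)) / ∫ x, fX x * f (s - x) := by
  have hint : ∫ x, (x - c) * fX x * f (s - x) =
      (∫ x, x * fX x * f (s - x)) - c * ∫ x, fX x * f (s - x) := by
    rw [← integral_const_mul, ← integral_sub (hX.integrable_id_mul.mul_comp_sub hf hfs hqc s)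
      ((hX.integrable.mul_comp_sub hf hfs hqc s).const_mul c)]
    congr 1 with x
    ring
  rw [hint, postMean, sub_div,
    mul_div_cancel_right₀ _ (integral_mul_comp_sub_pos hX hf hfs hqc s).ne']

variable (hXs : SymmAbout μ fX)
include hXs

theorem postMean_two_mul_sub (s : ℝ) :
    postMean fX f (2 * μ - s) = 2 * μ - postMean fX f s := by
  have reflect : ∀ x, fX (2 * μ - x) * f (2 * μ - s - (2 * μ - x)) = fX x * f (s - x) := by
    intro x
    rw [hXs.apply_two_mul_sub, show 2 * μ - s - (2 * μ - x) = -(s - x) by ring, hfs.apply_neg]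
  have hD : ∫ x, fX x * f (2 * μ - s - x) = ∫ x, fX x * f (s - x) := by
    rw [← integral_sub_left_eq_self _ volume (2 * μ)]
    simp only [reflect]
  have hN : ∫ x, x * fX x * f (2 * μ - s - x) = -∫ x, (x - 2 * μ) * fX x * f (s - x) := by
    rw [← integral_sub_left_eq_self _ volume (2 * μ), ← integral_neg]
    congr 1 with x
    rw [mul_assoc, reflect]
    ring
  rw [postMean, hD, hN, neg_div, ← postMean_sub_eq hX hf hfs hqc s (2 * μ)]
  ring

theorem le_postMean (hs : μ ≤ s) : μ ≤ postMean fX f s := by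
  rw [← sub_nonneg, postMean_sub_eq hX hf hfs hqc]
  refine div_nonneg (integral_nonneg_of_reflect
    (hX.integrable_sub_mul μ |>.mul_comp_sub hf hfs hqc s) μ fun x hx => ?_)
    (integral_mul_comp_sub_pos hX hf hfs hqc s).le
  have hle : f (s - (2 * μ - x)) ≤ f (s - x) :=
    hqc.le_of_abs_le hfs (abs_le_abs (by linarith) (by linarith))
  rw [hXs.apply_two_mul_sub]
  linear_combination mul_nonneg (mul_nonneg (sub_nonneg.2 hx) (hX.1 x).le) (sub_nonneg.2 hle)

theorem postMean_le (hXlc : LogConcaveFn fX) (hs : μ ≤ s) : postMean fX f s ≤ s := by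
  rw [← sub_nonpos, postMean_sub_eq hX hf hfs hqc]
  refine div_nonpos_of_nonpos_of_nonneg (integral_nonpos_of_reflect
    (hX.integrable_sub_mul s |>.mul_comp_sub hf hfs hqc s) s fun x hx => ?_)
    (integral_mul_comp_sub_pos hX hf hfs hqc s).le
  have hle : fX x ≤ fX (2 * s - x) := (hXlc.quasiConcaveFn hX.1).le_of_abs_sub_le hXs
    (abs_le_abs (by linarith) (by linarith))
  rw [show s - (2 * s - x) = -(s - x) by ring, hfs.apply_neg]
  linear_combination
    mul_nonneg (mul_nonneg (sub_nonneg.2 hx) (hf.1 (s - x)).le) (sub_nonneg.2 hle)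

end Posterior

section Comparison

theorem integrable_fst_sub_snd_mul {f g : ℝ → ℝ} (hf : Integrable f)
    (hf' : Integrable fun x => x * f x) (hg : Integrable g) (hg' : Integrable fun y => y * g y) :
    Integrable fun z : ℝ × ℝ => (z.1 - z.2) * (f z.1 * g z.2) := by
  rw [Measure.volume_eq_prod]
  exact ((hf'.mul_prod hg).sub (hf.mul_prod hg')).congr (.of_forall fun z => by
    simp only [Pi.sub_apply]
    ring)

theorem integral_fst_sub_snd_mul {f g : ℝ → ℝ} (hf : Integrable f)
    (hf' : Integrable fun x => x * f x) (hg : Integrable g) (hg' : Integrable fun y => y * g y) :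
    ∫ z : ℝ × ℝ, (z.1 - z.2) * (f z.1 * g z.2) =
      (∫ x, x * f x) * (∫ y, g y) - (∫ x, f x) * ∫ y, y * g y := by
  rw [Measure.volume_eq_prod, ← integral_prod_mul, ← integral_prod_mul,
    ← integral_sub (hf'.mul_prod hg) (hf.mul_prod hg')]
  congr 1 with z
  ring

variable {fX fA fB : ℝ → ℝ} {μ s : ℝ}
  (hX : IsDensity fX) (hXs : SymmAbout μ fX) (hXlc : LogConcaveFn fX)
  (hA : IsDensity fA) (hAs : SymmAbout 0 fA) (hAqc : QuasiConcaveFn fA)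
  (hB : IsDensity fB) (hBs : SymmAbout 0 fB) (hBqc : QuasiConcaveFn fB)
  (hconf : LessPrecise fB fA)

include hX hXs hXlc hA hAs hB hBs hconf in
theorem cross_term_nonneg (hs : μ ≤ s) (x y : ℝ) :
    0 ≤ (x - y) * (fA (s - x) * fB (s - y) - fA (s - y) * fB (s - x)) *
      (fX x * fX y - fX (2 * s - x) * fX (2 * s - y)) := by
  wlog hxy : y ≤ x generalizing x y
  · linear_combination this y x (le_of_not_ge hxy)
  -- for `y ≤ x`, the last two factors both have the sign of `2 * s - x - y`
  rcases le_total (x + y) (2 * s) with h | h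
  · have hK : fB (s - x) * fA (s - y) ≤ fB (s - y) * fA (s - x) :=
      hconf.mul_le_mul_of_abs_le hB.continuous hA.continuous hA.1 hBs hAs
        (abs_le_abs (by linarith) (by linarith))
    have hL := hXlc.mul_le_mul_of_add_le hX.1 hXs hs h
    linear_combination mul_nonneg (mul_nonneg (sub_nonneg.2 hxy) (sub_nonneg.2 hK))
      (sub_nonneg.2 hL)
  · have hK : fB (s - y) * fA (s - x) ≤ fB (s - x) * fA (s - y) :=
      hconf.mul_le_mul_of_abs_le hB.continuous hA.continuous hA.1 hBs hAs
        (by rw [abs_sub_comm s x]; exact abs_le_abs (by linarith) (by linarith))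
    have hL := hXlc.mul_le_mul_of_add_le hX.1 hXs hs (x := 2 * s - x) (y := 2 * s - y)
      (by linarith)
    rw [sub_sub_cancel, sub_sub_cancel] at hL
    linear_combination mul_nonneg (mul_nonneg (sub_nonneg.2 hxy) (sub_nonneg.2 hK))
      (sub_nonneg.2 hL)

include hX hXs hXlc hA hAs hB hBs hconf in
theorem integral_cross_nonneg (hs : μ ≤ s)
    (hH : Integrable fun z : ℝ × ℝ =>
      (z.1 - z.2) * (fX z.1 * fA (s - z.1) * (fX z.2 * fB (s - z.2)))) :
    0 ≤ ∫ z : ℝ × ℝ, (z.1 - z.2) * (fX z.1 * fA (s - z.1) * (fX z.2 * fB (s - z.2))) := by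
  set H : ℝ × ℝ → ℝ :=
    fun z => (z.1 - z.2) * (fX z.1 * fA (s - z.1) * (fX z.2 * fB (s - z.2)))
  have hswap : MeasurePreserving Prod.swap (volume : Measure (ℝ × ℝ)) volume := by
    rw [Measure.volume_eq_prod]
    exact Measure.measurePreserving_swap
  have hswap_emb := MeasurableEquiv.prodComm (α := ℝ) (β := ℝ) |>.measurableEmbedding
  -- symmetrizing under `swap` and under reflection through `(s, s)` turns the integrand
  -- into the pointwise nonnegative `cross_term_nonneg`
  have hG : Integrable fun z => H z + H z.swap :=
    hH.add ((hswap.integrable_comp_emb hswap_emb).2 hH)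
  have hsymm := (Measure.measurePreserving_sub_left volume ((2 * s, 2 * s) : ℝ × ℝ))
    |>.integral_nonneg_of_add_comp (measurableEmbedding_subLeft _) hG fun ⟨x, y⟩ => by
    have reflect {g : ℝ → ℝ} (hg : SymmAbout 0 g) (t : ℝ) :
        g (s - (2 * s - t)) = g (s - t) := by
      rw [← hg.apply_neg]
      congr 1
      ring
    simp only [H, Prod.swap, Prod.mk_sub_mk, reflect hAs, reflect hBs]
    linear_combination cross_term_nonneg hX hXs hXlc hA hAs hB hBs hconf hs x y
  rw [hswap.integral_add_comp hswap_emb hH] at hsymm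
  linarith

include hX hXs hXlc hA hAs hAqc hB hBs hBqc hconf in
theorem postMean_le_postMean (hs : μ ≤ s) : postMean fX fB s ≤ postMean fX fA s := by
  have iA := hX.integrable.mul_comp_sub hA hAs hAqc s
  have iB := hX.integrable.mul_comp_sub hB hBs hBqc s
  have iA' : Integrable fun x => x * (fX x * fA (s - x)) := by
    simpa only [mul_assoc] using hX.integrable_id_mul.mul_comp_sub hA hAs hAqc s
  have iB' : Integrable fun x => x * (fX x * fB (s - x)) := by
    simpa only [mul_assoc] using hX.integrable_id_mul.mul_comp_sub hB hBs hBqc s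
  have hcross := integral_cross_nonneg hX hXs hXlc hA hAs hB hBs hconf hs
    (integrable_fst_sub_snd_mul iA iA' iB iB')
  rw [integral_fst_sub_snd_mul iA iA' iB iB'] at hcross
  simp only [← mul_assoc] at hcross
  rw [postMean, postMean, div_le_div_iff₀ (integral_mul_comp_sub_pos hX hB hBs hBqc s)
    (integral_mul_comp_sub_pos hX hA hAs hAqc s)]
  linarith

end Comparison

section Averaging

def IsOddShrinkage (μ : ℝ) (g : ℝ → ℝ) : Prop :=
  Measurable g ∧ (∀ s, g (2 * μ - s) = 2 * μ - g s) ∧ ∀ s, |g s - μ| ≤ |s - μ|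

variable {fX f fε g g' : ℝ → ℝ} {μ x : ℝ}

theorem IsDensity.integral_id_mul_comp_sub (hε : IsDensity fε)
    (hεs : SymmAbout 0 fε) (x : ℝ) : ∫ s, s * fε (s - x) = x := by
  have hodd : ∫ t, t * fε t = 0 := by
    have := integral_neg_eq_self (fun t => t * fε t) volume
    simp only [neg_mul, hεs.apply_neg, integral_neg] at this
    linarith
  rw [← integral_add_right_eq_self _ x]
  simp only [add_sub_cancel_right, add_mul]
  rw [integral_add hε.integrable_id_mul (hε.integrable.const_mul x), hodd, integral_const_mul,
    hε.2.2.1]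
  ring

theorem IsDensity.integral_const_mul_comp_sub (hε : IsDensity fε) (c x : ℝ) :
    ∫ s, c * fε (s - x) = c := by
  rw [integral_const_mul, integral_sub_right_eq_self (fun s => fε s), hε.2.2.1, mul_one]

theorem isOddShrinkage_id : IsOddShrinkage μ fun s => s :=
  ⟨measurable_id, fun _ => rfl, fun _ => le_rfl⟩

theorem isOddShrinkage_const : IsOddShrinkage μ fun _ => μ :=
  ⟨measurable_const, fun _ => by ring, fun _ => by simp⟩

theorem isOddShrinkage_postMean (hX : IsDensity fX) (hXs : SymmAbout μ fX)
    (hXlc : LogConcaveFn fX) (hf : IsDensity f) (hfs : SymmAbout 0 f) (hqc : QuasiConcaveFn f) :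
    IsOddShrinkage μ (postMean fX f) := by
  refine ⟨measurable_postMean hX.continuous hf.continuous,
    postMean_two_mul_sub hX hf hfs hqc hXs, fun s => ?_⟩
  rcases le_total μ s with hs | hs
  · have h₁ := le_postMean hX hf hfs hqc hXs hs
    have h₂ := postMean_le hX hf hfs hqc hXs hXlc hs
    exact abs_le_abs (by linarith) (by linarith)
  · have h₁ := le_postMean hX hf hfs hqc hXs (s := 2 * μ - s) (by linarith)
    have h₂ := postMean_le hX hf hfs hqc hXs hXlc (s := 2 * μ - s) (by linarith)
    rw [postMean_two_mul_sub hX hf hfs hqc hXs] at h₁ h₂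
    rw [abs_sub_comm _ μ, abs_sub_comm s]
    exact abs_le_abs (by linarith) (by linarith)

theorem IsOddShrinkage.integrable_mul_comp_sub (hg : IsOddShrinkage μ g) (hε : IsDensity fε)
    (x : ℝ) : Integrable fun s => g s * fε (s - x) := by
  refine Integrable.mono' ((hε.2.2.2.comp_sub_right x).add
      ((hε.integrable.comp_sub_right x).const_mul (|x - μ| + |μ|)))
    (hg.1.aestronglyMeasurable.mul
      (hε.continuous.comp (continuous_sub_right x)).aestronglyMeasurable)
    (.of_forall fun s => ?_)
  have hgs : |g s| ≤ |s - x| + (|x - μ| + |μ|) := by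
    linarith [abs_sub_abs_le_abs_sub (g s) μ, hg.2.2 s, abs_sub_le s x μ]
  rw [norm_mul, norm_of_nonneg (hε.1 _).le, Real.norm_eq_abs, Pi.add_apply]
  linear_combination mul_le_mul_of_nonneg_right hgs (hε.1 (s - x)).le

variable (hε : IsDensity fε) (hεs : SymmAbout 0 fε) (hεqc : QuasiConcaveFn fε)
  (hg : IsOddShrinkage μ g) (hg' : IsOddShrinkage μ g') (hle : ∀ s, μ ≤ s → g' s ≤ g s)
include hε hεs hεqc hg hg' hle

theorem IsOddShrinkage.integral_mul_le_of_le (hx : μ ≤ x) :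
    ∫ s, g' s * fε (s - x) ≤ ∫ s, g s * fε (s - x) := by
  have ig := hg.integrable_mul_comp_sub hε x
  have ig' := hg'.integrable_mul_comp_sub hε x
  rw [← sub_nonneg, ← integral_sub ig ig']
  refine integral_nonneg_of_reflect (ig.sub ig') μ fun s hs => ?_
  have hεle : fε (2 * μ - s - x) ≤ fε (s - x) := hεqc.le_of_abs_le hεs
    ((abs_le.2 ⟨by linarith, by linarith⟩ : |s - x| ≤ -(2 * μ - s - x)).trans (neg_le_abs _))
  rw [hg.2.1, hg'.2.1]
  linear_combination mul_nonneg (sub_nonneg.2 (hle s hs)) (sub_nonneg.2 hεle)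

theorem IsOddShrinkage.integral_mul_le_of_ge (hx : x ≤ μ) :
    ∫ s, g s * fε (s - x) ≤ ∫ s, g' s * fε (s - x) := by
  have ig := hg.integrable_mul_comp_sub hε x
  have ig' := hg'.integrable_mul_comp_sub hε x
  rw [← sub_nonpos, ← integral_sub ig ig']
  refine integral_nonpos_of_reflect (ig.sub ig') μ fun s hs => ?_
  have hεle : fε (s - x) ≤ fε (2 * μ - s - x) := hεqc.le_of_abs_le hεs
    ((abs_le.2 ⟨by linarith, by linarith⟩ : |2 * μ - s - x| ≤ s - x).trans (le_abs_self _))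
  rw [hg.2.1, hg'.2.1]
  linear_combination mul_nonneg (sub_nonneg.2 (hle s hs)) (sub_nonneg.2 hεle)

end Averaging

theorem overconfidence_average_posterior_general
    (fX fε fA fB : ℝ → ℝ) (μ : ℝ)
    (hfX : IsDensity fX) (hfXsym : SymmAbout μ fX) (hfXlc : LogConcaveFn fX)
    (hfε : IsDensity fε) (hfεsym : SymmAbout 0 fε) (hfεqc : QuasiConcaveFn fε)
    (hfA : IsDensity fA) (hfAsym : SymmAbout 0 fA) (hfAqc : QuasiConcaveFn fA)
    (hfB : IsDensity fB) (hfBsym : SymmAbout 0 fB) (hfBqc : QuasiConcaveFn fB)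
    (hconf : LessPrecise fB fA) :
    (∀ x, μ ≤ x →
        (∫ s, postMean fX fA s * fε (s - x)) ≤ x ∧
        (∫ s, postMean fX fB s * fε (s - x)) ≤ ∫ s, postMean fX fA s * fε (s - x) ∧
        μ ≤ ∫ s, postMean fX fB s * fε (s - x)) ∧
    (∀ x ≤ μ,
        x ≤ ∫ s, postMean fX fA s * fε (s - x) ∧
        (∫ s, postMean fX fA s * fε (s - x)) ≤ ∫ s, postMean fX fB s * fε (s - x) ∧
        (∫ s, postMean fX fB s * fε (s - x)) ≤ μ) := by
  have hA := isOddShrinkage_postMean hfX hfXsym hfXlc hfA hfAsym hfAqc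
  have hB := isOddShrinkage_postMean hfX hfXsym hfXlc hfB hfBsym hfBqc
  have hid : IsOddShrinkage μ fun s => s := isOddShrinkage_id
  have hμ : IsOddShrinkage μ fun _ => μ := isOddShrinkage_const
  have hA_le_id : ∀ s, μ ≤ s → postMean fX fA s ≤ s := fun s =>
    postMean_le hfX hfA hfAsym hfAqc hfXsym hfXlc
  have hB_le_A : ∀ s, μ ≤ s → postMean fX fB s ≤ postMean fX fA s := fun s =>
    postMean_le_postMean hfX hfXsym hfXlc hfA hfAsym hfAqc hfB hfBsym hfBqc hconf
  have hμ_le_B : ∀ s, μ ≤ s → μ ≤ postMean fX fB s := fun s =>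
    le_postMean hfX hfB hfBsym hfBqc hfXsym
  have hid_avg := hfε.integral_id_mul_comp_sub hfεsym
  have hμ_avg := hfε.integral_const_mul_comp_sub μ
  refine ⟨fun x hx => ⟨?_, ?_, ?_⟩, fun x hx => ⟨?_, ?_, ?_⟩⟩
  · simpa only [hid_avg] using hid.integral_mul_le_of_le hfε hfεsym hfεqc hA hA_le_id hx
  · exact hA.integral_mul_le_of_le hfε hfεsym hfεqc hB hB_le_A hx
  · simpa only [hμ_avg] using hB.integral_mul_le_of_le hfε hfεsym hfεqc hμ hμ_le_B hx
  · simpa only [hid_avg] using hid.integral_mul_le_of_ge hfε hfεsym hfεqc hA hA_le_id hx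
  · exact hA.integral_mul_le_of_ge hfε hfεsym hfεqc hB hB_le_A hx
  · simpa only [hμ_avg] using hB.integral_mul_le_of_ge hfε hfεsym hfεqc hμ hμ_le_B hx

/-- Proposition 2: greater confidence in the signal brings the average posterior
mean closer to the state. -/
theorem overconfidence_average_posterior
    (fX fε fA fB : ℝ → ℝ) (μ : ℝ)
    (hfX : IsDensity fX) (hfXsym : SymmAbout μ fX) (hfXlc : LogConcaveFn fX)
    (hμ : μ = ∫ x, x * fX x)
    (hfε : IsDensity fε) (hfεsym : SymmAbout 0 fε) (hfεqc : QuasiConcaveFn fε)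
    (hfA : IsDensity fA) (hfAsym : SymmAbout 0 fA) (hfAqc : QuasiConcaveFn fA)
    (hfB : IsDensity fB) (hfBsym : SymmAbout 0 fB) (hfBqc : QuasiConcaveFn fB)
    (hconf : LessPrecise fB fA) :
    (∀ x, μ ≤ x →
        (∫ s, postMean fX fA s * fε (s - x)) ≤ x ∧
        (∫ s, postMean fX fB s * fε (s - x)) ≤ ∫ s, postMean fX fA s * fε (s - x) ∧
        μ ≤ ∫ s, postMean fX fB s * fε (s - x)) ∧
    (∀ x ≤ μ,
        x ≤ ∫ s, postMean fX fA s * fε (s - x) ∧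
        (∫ s, postMean fX fA s * fε (s - x)) ≤ ∫ s, postMean fX fB s * fε (s - x) ∧
        (∫ s, postMean fX fB s * fε (s - x)) ≤ μ) :=
  overconfidence_average_posterior_general fX fε fA fB μ hfX hfXsym hfXlc hfε hfεsym hfεqc hfA
    hfAsym hfAqc hfB hfBsym hfBqc hconf
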